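/- arXiv:2404.14083 — 4 statements merged into one kernel-verified Lean document; each statement's English description precedes it below -/
import Mathlib

section
/- A quandle X with |X| = k finite is uniform (n-homogeneous for all n) if and only if it is k-homogeneous, and also if and only if it is (k−1)-homogeneous. -/
open Quandles

/-- The setoid on `n`-tuples whose classes are orbits of the diagonal action
of the full symmetric group `X ≃ X`. -/
def symOrbit (X : Type*) (n : ℕ) : Setoid (Fin n → X) where
  r x y := ∃ π : X ≃ X, ∀ i, π (x i) = y i
  iseqv := by
    refine ⟨fun x => ⟨Equiv.refl X, fun i => rfl⟩, ?_, ?_⟩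
    · rintro x y ⟨π, h⟩
      exact ⟨π.symm, fun i => by rw [← h i, Equiv.symm_apply_apply]⟩
    · rintro x y z ⟨π, h⟩ ⟨σ, h'⟩
      exact ⟨π.trans σ, fun i => by simp [Equiv.trans_apply, h i, h' i]⟩

/-- An automorphism of a quandle: a bijection preserving the quandle operation. -/
def IsQuandleAut {X : Type*} [Quandle X] (f : X ≃ X) : Prop :=
  ∀ a b : X, f (a ◃ b) = f a ◃ f b

theorem IsQuandleAut.symm {X : Type*} [Quandle X] {f : X ≃ X} (hf : IsQuandleAut f) :
    IsQuandleAut f.symm := fun a b =>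
  f.injective (by rw [Equiv.apply_symm_apply, hf, Equiv.apply_symm_apply, Equiv.apply_symm_apply])

/-- The setoid on `n`-tuples whose classes are orbits of the diagonal action of
the quandle automorphism group. -/
def autOrbit (X : Type*) [Quandle X] (n : ℕ) : Setoid (Fin n → X) where
  r x y := ∃ f : X ≃ X, IsQuandleAut f ∧ ∀ i, f (x i) = y i
  iseqv := by
    refine ⟨fun x => ⟨Equiv.refl X, fun a b => rfl, fun i => rfl⟩, ?_, ?_⟩
    · rintro x y ⟨f, hf, h⟩
      exact ⟨f.symm, hf.symm, fun i => by rw [← h i, Equiv.symm_apply_apply]⟩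
    · rintro x y z ⟨f, hf, h⟩ ⟨g, hg, h'⟩
      refine ⟨f.trans g, fun a b => ?_, fun i => by simp [Equiv.trans_apply, h i, h' i]⟩
      simp only [Equiv.trans_apply]; rw [hf, hg]

/-- A quandle is `n`-homogeneous if any two `n`-tuples with the same equality
pattern are related by a quandle automorphism. -/
def IsNHomogeneous (X : Type*) [Quandle X] (n : ℕ) : Prop :=
  ∀ x y : Fin n → X, (∀ i j, x i = x j ↔ y i = y j) →
    ∃ f : X ≃ X, IsQuandleAut f ∧ ∀ i, f (x i) = y i

lemma isNHom_of_isEmpty {X : Type*} [Quandle X] [IsEmpty X] (n : ℕ) :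
    IsNHomogeneous X n := fun x _ _ =>
  ⟨Equiv.refl X, fun _ _ => rfl, fun i => (IsEmpty.false (x i)).elim⟩

lemma isNHom_down {X : Type*} [Quandle X] {m n : ℕ} (hmn : m ≤ n)
    (h : IsNHomogeneous X n) : IsNHomogeneous X m := by
  intro x y hxy
  rcases Nat.eq_zero_or_pos m with rfl | hm
  · exact ⟨Equiv.refl X, fun _ _ => rfl, fun i => i.elim0⟩
  · set g : Fin n → Fin m := fun i => if h : i.1 < m then ⟨i.1, h⟩ else ⟨0, hm⟩ with hg
    obtain ⟨f, hf, hfx⟩ := h (x ∘ g) (y ∘ g) (fun a b => hxy _ _)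
    refine ⟨f, hf, fun i => ?_⟩
    have := hfx ⟨i.1, lt_of_lt_of_le i.2 hmn⟩
    simpa [hg, Function.comp, i.2] using this

lemma isNHom_step_noninj {X : Type*} [Quandle X] {m : ℕ} (h : IsNHomogeneous X m)
    (x y : Fin (m + 1) → X) (hxy : ∀ i j, x i = x j ↔ y i = y j)
    (i j : Fin (m + 1)) (hij : i ≠ j) (hx : x i = x j) :
    ∃ f : X ≃ X, IsQuandleAut f ∧ ∀ i, f (x i) = y i := by
  obtain ⟨f, hf, hfx⟩ := h (x ∘ j.succAbove) (y ∘ j.succAbove) (fun a b => hxy _ _)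
  refine ⟨f, hf, fun t => ?_⟩
  rcases eq_or_ne t j with rfl | ht
  · obtain ⟨s, hs⟩ := Fin.exists_succAbove_eq hij
    have h1 := hfx s
    simp only [Function.comp, hs] at h1
    rw [← hx, h1]
    exact (hxy i t).mp hx
  · obtain ⟨s, hs⟩ := Fin.exists_succAbove_eq ht
    have h1 := hfx s
    simpa [Function.comp, hs] using h1

lemma isNHom_up {X : Type*} [Fintype X] [Quandle X] {m : ℕ} (hm : Fintype.card X ≤ m)
    (h : IsNHomogeneous X m) : IsNHomogeneous X (m + 1) := by
  intro x y hxy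
  have hnx : ¬ Function.Injective x := by
    intro hx
    have := Fintype.card_le_of_injective x hx
    simp only [Fintype.card_fin] at this
    omega
  rw [Function.not_injective_iff] at hnx
  obtain ⟨i, j, hij, hne⟩ := hnx
  exact isNHom_step_noninj h x y hxy i j hne hij

lemma isNHom_card_step {X : Type*} [Fintype X] [Quandle X] {m : ℕ}
    (hc : Fintype.card X = m + 1) (h : IsNHomogeneous X m) :
    IsNHomogeneous X (m + 1) := by
  intro x y hxy
  by_cases hx : Function.Injective x
  · have hy : Function.Injective y := fun a b hab => hx ((hxy a b).mpr hab)
    have hys : Function.Surjective y := by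
      have := (Fintype.bijective_iff_injective_and_card y).mpr
        ⟨hy, by simp [hc]⟩
      exact this.surjective
    obtain ⟨f, hf, hfx⟩ := h (x ∘ Fin.castSucc) (y ∘ Fin.castSucc) (fun a b => hxy _ _)
    refine ⟨f, hf, fun t => ?_⟩
    rcases eq_or_ne t (Fin.last m) with rfl | ht
    · obtain ⟨s, hs⟩ := hys (f (x (Fin.last m)))
      rcases eq_or_ne s (Fin.last m) with rfl | hs'
      · exact hs.symm
      · exfalso
        obtain ⟨u, hu⟩ := Fin.exists_castSucc_eq.mpr hs'
        have h1 := hfx u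
        simp only [Function.comp, hu] at h1
        rw [hs] at h1
        exact hs' (hx (f.injective h1))
    · obtain ⟨u, hu⟩ := Fin.exists_castSucc_eq.mpr ht
      have h1 := hfx u
      simpa [Function.comp, hu] using h1
  · rw [Function.not_injective_iff] at hx
    obtain ⟨i, j, hij, hne⟩ := hx
    exact isNHom_step_noninj h x y hxy i j hne hij

lemma isNHom_all_of_card {X : Type*} [Fintype X] [Quandle X]
    (h : IsNHomogeneous X (Fintype.card X)) : ∀ n, IsNHomogeneous X n := by
  have key : ∀ d, IsNHomogeneous X (Fintype.card X + d) := by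
    intro d
    induction d with
    | zero => simpa using h
    | succ d ih => exact isNHom_up (Nat.le_add_right _ _) ih
  intro n
  rcases le_or_gt n (Fintype.card X) with hn | hn
  · exact isNHom_down hn h
  · have := key (n - Fintype.card X)
    rwa [Nat.add_sub_cancel' hn.le] at this

theorem stmt9 (X : Type*) [Fintype X] [Quandle X] (k : ℕ) (hk : Fintype.card X = k) :
    ((∀ n, IsNHomogeneous X n) ↔ IsNHomogeneous X k) ∧
    ((∀ n, IsNHomogeneous X n) ↔ IsNHomogeneous X (k - 1)) := by
  rcases k with _ | m
  · have : IsEmpty X := Fintype.card_eq_zero_iff.mp hk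
    exact ⟨⟨fun h => h 0, fun _ n => isNHom_of_isEmpty n⟩,
      ⟨fun h => h 0, fun _ n => isNHom_of_isEmpty n⟩⟩
  · constructor
    · exact ⟨fun h => h (m + 1), fun h => isNHom_all_of_card (hk ▸ h)⟩
    · refine ⟨fun h => h (m + 1 - 1), fun h => ?_⟩
      simp only [Nat.add_sub_cancel] at h
      exact isNHom_all_of_card (hk ▸ isNHom_card_step hk h)
end

section
/- If X is a quandle with Aut(X) equal to the full symmetric group on X, then X is uniform, i.e., n-homogeneous for every n. Conversely, if X is finite and uniform, then Aut(X) is the full symmetric group on X. -/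
open Quandles

theorem stmt10 (X : Type*) [Quandle X] :
    ((∀ f : X ≃ X, IsQuandleAut f) → ∀ n, IsNHomogeneous X n) ∧
    (Finite X → (∀ n, IsNHomogeneous X n) → ∀ f : X ≃ X, IsQuandleAut f) := by
  classical
  constructor
  · intro hall n x y hpat
    -- build an embedding from range x to X sending x i to y i
    have hF : ∀ a : Set.range x, ∃ i, x i = (a : X) := fun a => a.2
    set F : Set.range x → X := fun a => y (hF a).choose with hFdef
    have hFx : ∀ i, F ⟨x i, ⟨i, rfl⟩⟩ = y i := by
      intro i
      have hs : x (hF ⟨x i, ⟨i, rfl⟩⟩).choose = x i := (hF ⟨x i, ⟨i, rfl⟩⟩).choose_spec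
      exact (hpat _ _).mp hs
    have hFinj : Function.Injective F := by
      rintro a b hab
      have ha := (hF a).choose_spec
      have hb := (hF b).choose_spec
      have : x (hF a).choose = x (hF b).choose := (hpat _ _).mpr hab
      exact Subtype.ext (ha ▸ hb ▸ this)
    obtain ⟨g, hg⟩ : ∃ g : X ≃ X, ∀ a : Set.range x, g a = F a := by
      cases finite_or_infinite X with
      | inl h =>
        exact Cardinal.extend_function_finite ⟨F, hFinj⟩ ⟨Equiv.refl X⟩
      | inr h =>
        refine Cardinal.extend_function_of_lt ⟨F, hFinj⟩ ?_ ⟨Equiv.refl X⟩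
        have : (Set.range x).Finite := Set.finite_range x
        calc Cardinal.mk (Set.range x) < Cardinal.aleph0 := this.lt_aleph0
          _ ≤ Cardinal.mk X := Cardinal.aleph0_le_mk X
    exact ⟨g, hall g, fun i => (hg ⟨x i, ⟨i, rfl⟩⟩).trans (hFx i)⟩
  · intro _ hhom f
    obtain ⟨m, ⟨e⟩⟩ : ∃ m : ℕ, Nonempty (Fin m ≃ X) := Finite.exists_equiv_fin X |>.imp
      fun m ⟨e⟩ => ⟨e.symm⟩
    obtain ⟨g, hg, hgx⟩ := hhom m (fun i => e i) (fun i => f (e i)) (by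
      intro i j
      exact ⟨fun h => by rw [e.injective h], fun h => by rw [e.injective (f.injective h)]⟩)
    have hge : ∀ a : X, g a = f a := by
      intro a
      have := hgx (e.symm a)
      simpa using this
    intro a b
    rw [← hge, ← hge, ← hge, hg]
end

section
/- Let X be a finite uniform quandle. Then either X is isomorphic to the dihedral quandle R_3, or X is trivial (x ◁ y = x for all x, y). -/
open Quandles

/-! A nontrivial product `a ◃ b ≠ b` forces `a`, `b`, `a ◃ b` to be distinct. An automorphism
fixing `a` and `b` fixes `a ◃ b`, so 3-homogeneity leaves no room for a fourth element, and
2-homogeneity transports `a ◃ b ∉ {a, b}` to every pair of distinct elements. Hence `X` has three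
elements and `x ◃ y` is the third one whenever `x ≠ y`; `R₃` has the same table, so every bijection
`X ≃ R₃` is an isomorphism. -/

namespace Quandle

variable {X : Type*} [Quandle X]

theorem act_ne_left_of_ne {x y : X} (hxy : x ≠ y) : x ◃ y ≠ x := fun h =>
  hxy ((Rack.left_cancel x).mp (h.trans fix.symm)).symm

theorem ne_of_act_ne_right {x y : X} (h : x ◃ y ≠ y) : x ≠ y := by
  rintro rfl
  exact h fix

theorem dihedral_three_act_eq {u v w : Dihedral 3} (huv : u ≠ v) (hwu : w ≠ u) (hwv : w ≠ v) :
    u ◃ v = w := by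
  have table : ∀ u v w : ZMod 3, u ≠ v → w ≠ u → w ≠ v → dihedralAct 3 u v = w := by decide
  exact table u v w huv hwu hwv

theorem exists_iso_dihedral_three (hX : Nat.card X = 3) (hact : ∀ x y : X, x ≠ y → x ◃ y ≠ y) :
    ∃ f : X ≃ Dihedral 3, ∀ a b : X, f (a ◃ b) = f a ◃ f b := by
  have : Finite X := Nat.finite_of_card_ne_zero (by omega)
  let f : X ≃ Dihedral 3 := Finite.equivFinOfCardEq hX
  refine ⟨f, fun a b => ?_⟩
  obtain rfl | hab := eq_or_ne a b
  · simp only [fix]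
  exact (dihedral_three_act_eq (f.injective.ne hab) (f.injective.ne (act_ne_left_of_ne hab))
    (f.injective.ne (hact a b hab))).symm

end Quandle

namespace IsNHomogeneous

open Quandle

variable {X : Type*} [Quandle X] {a b : X}

theorem act_ne_right (h : IsNHomogeneous X 2) (hab : a ◃ b ≠ b) {x y : X} (hxy : x ≠ y) :
    x ◃ y ≠ y := by
  have hab' := ne_of_act_ne_right hab
  obtain ⟨f, hf, hfab⟩ := h ![a, b] ![x, y] (by
    simp [Fin.forall_fin_two, hab', hab'.symm, hxy, hxy.symm])
  have hfa : f a = x := hfab 0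
  have hfb : f b = y := hfab 1
  rw [← hfa, ← hfb, ← hf]
  exact f.injective.ne hab

theorem eq_or_eq_or_eq_act (h : IsNHomogeneous X 3) (hab : a ◃ b ≠ b) (d : X) :
    d = a ∨ d = b ∨ d = a ◃ b := by
  by_contra! hd
  obtain ⟨hda, hdb, hdc⟩ := hd
  have hab' := ne_of_act_ne_right hab
  have hca := act_ne_left_of_ne hab'
  obtain ⟨f, hf, hfabc⟩ := h ![a, b, a ◃ b] ![a, b, d] (by
    simp [Fin.forall_fin_succ, hab', hab'.symm, hca, hca.symm, hab, hab.symm, hda, hda.symm,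
      hdb, hdb.symm])
  have hfa : f a = a := hfabc 0
  have hfb : f b = b := hfabc 1
  have hfc : f (a ◃ b) = d := hfabc 2
  exact hdc (by rw [← hfc, hf, hfa, hfb])

theorem natCard_eq_three (h : IsNHomogeneous X 3) (hab : a ◃ b ≠ b) : Nat.card X = 3 := by
  have hab' := ne_of_act_ne_right hab
  rw [← Set.ncard_univ, Set.ncard_eq_three]
  refine ⟨a, b, a ◃ b, hab', (act_ne_left_of_ne hab').symm, hab.symm, ?_⟩
  ext d
  simpa using h.eq_or_eq_or_eq_act hab d

end IsNHomogeneous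

theorem stmt13_general (X : Type*) [Quandle X] (h : ∀ n, IsNHomogeneous X n) :
    (∃ f : X ≃ Quandle.Dihedral 3, ∀ a b : X, f (a ◃ b) = f a ◃ f b) ∨
      (∀ a b : X, a ◃ b = b) := by
  by_cases htriv : ∃ a b : X, a ◃ b ≠ b
  · obtain ⟨a, b, hab⟩ := htriv
    exact Or.inl (Quandle.exists_iso_dihedral_three ((h 3).natCard_eq_three hab)
      fun x y => (h 2).act_ne_right hab)
  · exact Or.inr (by simpa using htriv)

/-- A finite uniform quandle is isomorphic to the dihedral quandle `R₃` or is trivial. -/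
theorem stmt13 (X : Type*) [Quandle X] [Finite X] (h : ∀ n, IsNHomogeneous X n) :
    (∃ f : X ≃ Quandle.Dihedral 3, ∀ a b : X, f (a ◃ b) = f a ◃ f b) ∨
      (∀ a b : X, a ◃ b = b) :=
  stmt13_general X h
end

section
/- Let X be a finite quandle whose automorphism group is the full symmetric group on X and with |X| ≥ 4. Then X is trivial: x ◁ y = x for all x, y ∈ X. -/
open Quandles

/-- A finite quandle with at least 4 elements whose automorphism group is the full
symmetric group is trivial. -/
theorem stmt14 (X : Type*) [Quandle X] [Finite X] (hcard : 4 ≤ Nat.card X)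
    (h : ∀ f : X ≃ X, IsQuandleAut f) :
    ∀ a b : X, a ◃ b = b := by
  classical
  have : Fintype X := Fintype.ofFinite X
  intro a b
  by_contra hne
  have hca : a ◃ b ≠ a := by
    intro hcb
    have hb : b = a := (Rack.left_cancel a).mp (by rw [hcb, Quandle.fix])
    rw [hb, Quandle.fix] at hne
    exact hne rfl
  obtain ⟨d, hd⟩ : ∃ d : X, d ∉ ({a, b, a ◃ b} : Finset X) := by
    by_contra hall
    push_neg at hall
    have hsub : (Finset.univ : Finset X) ⊆ {a, b, a ◃ b} := fun x _ => hall x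
    have h3 : Fintype.card X ≤ 3 := by
      have := Finset.card_le_card hsub
      simp only [Finset.card_univ] at this
      refine le_trans this ?_
      refine le_trans (Finset.card_insert_le _ _) (Nat.succ_le_succ ?_)
      exact le_trans (Finset.card_insert_le _ _) (Nat.succ_le_succ le_rfl)
    rw [Nat.card_eq_fintype_card] at hcard
    omega
  simp only [Finset.mem_insert, Finset.mem_singleton, not_or] at hd
  obtain ⟨hda, hdb, hdc⟩ := hd
  have hf := h (Equiv.swap (a ◃ b) d) a b
  rw [Equiv.swap_apply_of_ne_of_ne (Ne.symm hca) (fun e => hda e.symm),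
      Equiv.swap_apply_of_ne_of_ne (Ne.symm hne) (fun e => hdb e.symm),
      Equiv.swap_apply_left] at hf
  exact hdc hf
end
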